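/- Let C be a coalgebra over a field k and R a commutative k-algebra. If μ, ν : C → R are lazy linear maps, then their convolution product μ * ν is lazy; and if μ is lazy and convolution invertible with convolution inverse μ⁻¹, then μ⁻¹ is lazy. Hence the set Reg_ℓ(C,R) of convolution-invertible lazy linear maps is a subgroup of the group Reg(C,R) of convolution-invertible linear maps C → R. -/

import Mathlib

/-!
`conv` and `convUnit` are definitionally the product and unit of Mathlib's convolution algebra
`WithConv (C →ₗ[k] R)`, and lazy maps are exactly its central elements:
applying `φ.liftBaseChange R` (i.e. `r ⊗ c ↦ r φ(c)`) to the two sides of the laziness identity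
gives `μ * φ` and `φ * μ`, and these functionals separate the points of `R ⊗ C` because `C` is
free over `k`. The centre of a monoid is closed under products and under inverses of units.
-/

open TensorProduct

section Lazy

variable (k : Type*) [Field k] (C : Type*)
  [AddCommGroup C] [Module k C] [Coalgebra k C]
variable (R : Type*) [CommRing R] [Algebra k R]

/-- The convolution product `f * g = μ_R ∘ (f ⊗ g) ∘ Δ_C`. -/
noncomputable def conv (f g : C →ₗ[k] R) : C →ₗ[k] R :=
  LinearMap.mul' k R ∘ₗ TensorProduct.map f g ∘ₗ Coalgebra.comul (R := k)

/-- The unit `η_R ∘ ε_C` of the convolution monoid. -/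
noncomputable def convUnit : C →ₗ[k] R :=
  Algebra.linearMap k R ∘ₗ Coalgebra.counit (R := k)

/-- `μ : C → R` is lazy: `μ(x₁) ⊗ x₂ = μ(x₂) ⊗ x₁` in `R ⊗ C` for all `x`. -/
def IsLazy (μ : C →ₗ[k] R) : Prop :=
  ∀ x : C,
    TensorProduct.map μ (LinearMap.id : C →ₗ[k] C) (Coalgebra.comul (R := k) x)
      = TensorProduct.map μ (LinearMap.id : C →ₗ[k] C)
          ((TensorProduct.comm k C C) (Coalgebra.comul (R := k) x))

open WithConv

theorem TensorProduct.eq_zero_of_forall_liftBaseChange_eq_zero {S A M : Type*}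
    [CommSemiring S] [CommSemiring A] [Algebra S A] [AddCommMonoid M] [Module S M]
    [Module.Projective S M] {t : A ⊗[S] M} (h : ∀ φ : M →ₗ[S] A, φ.liftBaseChange A t = 0) :
    t = 0 := by
  refine (Module.forall_dual_apply_eq_zero_iff A t).mp fun g => ?_
  obtain ⟨φ, rfl⟩ := (LinearMap.liftBaseChangeEquiv A).surjective g
  exact h φ

section LiftBaseChange

variable {S A M : Type*} [CommSemiring S] [CommSemiring A] [Algebra S A]
  [AddCommMonoid M] [Module S M] [CoalgebraStruct S M]

theorem LinearMap.liftBaseChange_map_id_comul (μ φ : M →ₗ[S] A) (x : M) :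
    φ.liftBaseChange A (map μ LinearMap.id (Coalgebra.comul x)) = (toConv μ * toConv φ) x := by
  have : (φ.liftBaseChange A).restrictScalars S ∘ₗ map μ LinearMap.id = mul' S A ∘ₗ map μ φ := by
    ext; simp
  exact LinearMap.congr_fun this (Coalgebra.comul x)

theorem LinearMap.liftBaseChange_map_id_comm_comul (μ φ : M →ₗ[S] A) (x : M) :
    φ.liftBaseChange A (map μ LinearMap.id (TensorProduct.comm S M M (Coalgebra.comul x))) =
      (toConv φ * toConv μ) x := by
  have : (φ.liftBaseChange A).restrictScalars S ∘ₗ map μ LinearMap.id ∘ₗ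
      (TensorProduct.comm S M M).toLinearMap = mul' S A ∘ₗ map φ μ := by
    ext; simp [mul_comm]
  exact LinearMap.congr_fun this (Coalgebra.comul x)

end LiftBaseChange

theorem isLazy_iff_forall_commute (μ : C →ₗ[k] R) :
    IsLazy k C R μ ↔ ∀ φ : WithConv (C →ₗ[k] R), Commute (toConv μ) φ := by
  constructor
  · intro hμ φ
    ext x
    simpa only [LinearMap.liftBaseChange_map_id_comul,
      LinearMap.liftBaseChange_map_id_comm_comul] using congrArg (φ.ofConv.liftBaseChange R) (hμ x)
  · intro hμ x
    rw [← sub_eq_zero]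
    refine TensorProduct.eq_zero_of_forall_liftBaseChange_eq_zero fun φ => ?_
    rw [map_sub, LinearMap.liftBaseChange_map_id_comul, LinearMap.liftBaseChange_map_id_comm_comul,
      (hμ (toConv φ)).eq, sub_self]

/-- the convolution product of two lazy maps is lazy, and the
convolution inverse of a lazy map is lazy; hence the set `Reg_ℓ(C,R)` of
convolution-invertible lazy maps is a subgroup of `Reg(C,R)`. -/
theorem lazy_closed_under_conv_and_inverse :
    (∀ μ ν : C →ₗ[k] R, IsLazy k C R μ → IsLazy k C R ν →
      IsLazy k C R (conv k C R μ ν)) ∧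
    (∀ μ μ' : C →ₗ[k] R, IsLazy k C R μ →
      conv k C R μ μ' = convUnit k C R →
      conv k C R μ' μ = convUnit k C R →
      IsLazy k C R μ') := by
  refine ⟨fun μ ν hμ hν => ?_, fun μ μ' hμ hμμ' hμ'μ => ?_⟩
  · rw [isLazy_iff_forall_commute] at hμ hν ⊢
    exact fun φ => (hμ φ).mul_left (hν φ)
  · let u : (WithConv (C →ₗ[k] R))ˣ :=
      ⟨toConv μ, toConv μ', congrArg toConv hμμ', congrArg toConv hμ'μ⟩
    rw [isLazy_iff_forall_commute] at hμ ⊢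
    exact fun φ => (hμ φ).units_inv_left (u := u)

end Lazy
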